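/- Let ρ be a pseudometric on a set 𝒳, let Y = {y₁,...,y_m} ⊂ 𝒳, and suppose the ball B_ε^ρ(ȳ) contains strictly more than m/2 of the points of Y for some ȳ ∈ 𝒳 and ε > 0. For each i, set rᵢ = min{r ≥ 0 : |B_r^ρ(yᵢ) ∩ Y| > m/2}, let r̂ be the median of r₁,...,r_m, and let ℐ = {i : rᵢ ≤ r̂}. Then ρ(yᵢ, ȳ) ≤ 3ε for every i ∈ ℐ. -/

import Mathlib

/-!
The numbers `r i` estimate the distances `ρ (y i) ȳ` to within `ε`: the ball of radius
`ρ (y i) ȳ + ε` around `y i` contains the majority ball `B_ε(ȳ)`, and every ball around `y i`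
holding a majority meets `B_ε(ȳ)`. Hence every point of `B_ε(ȳ)` has `r i ≤ 2ε`; these form a
majority, so the median `r̂` is at most `2ε`, and `i ∈ ℐ` gives `ρ (y i) ȳ ≤ r i + ε ≤ 3ε`.
-/

open Finset

lemma Tuple.apply_sort_le_of_lt_card_filter_le {α : Type*} [LinearOrder α] {n : ℕ}
    (f : Fin n → α) {k : Fin n} {c : α} (hk : k < #{i | f i ≤ c}) :
    f (Tuple.sort f k) ≤ c := by
  have hcard : #{i | f (Tuple.sort f i) ≤ c} = #{i | f i ≤ c} :=
    card_equiv (Tuple.sort f) (by simp)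
  rw [← hcard] at hk
  exact (Tuple.lt_card_le_iff_apply_le_of_monotone (Tuple.monotone_sort f)).mp hk

lemma Fin.exists_of_half_lt_card_filter {m : ℕ} {p q : Fin m → Prop}
    [DecidablePred p] [DecidablePred q]
    (hp : (m : ℝ) / 2 < (#{j | p j} : ℝ)) (hq : (m : ℝ) / 2 < (#{j | q j} : ℝ)) :
    ∃ j, p j ∧ q j := by
  have hcard : #(univ : Finset (Fin m)) < #{j | p j} + #{j | q j} := by
    rw [card_univ, Fintype.card_fin]
    exact_mod_cast (by linarith : (m : ℝ) < #{j | p j} + #{j | q j})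
  obtain ⟨j, hj⟩ := inter_nonempty_of_card_lt_card_add_card
    (subset_univ _) (subset_univ _) hcard
  simp only [mem_inter, mem_filter_univ] at hj
  exact ⟨j, hj⟩

section MajorityRadius

variable {X : Type*} {m : ℕ} (ρ : X → X → ℝ) (y : Fin m → X)

/-- The paper's `rᵢ` is `sInf (majorityRadii ρ y (y i))`. -/
def majorityRadii (x : X) : Set ℝ :=
  {s | 0 ≤ s ∧ (m : ℝ) / 2 < (#{j | ρ x (y j) ≤ s} : ℝ)}

variable {ρ y} {x ybar : X} {ε : ℝ}
  (hmaj : (m : ℝ) / 2 < (#{j | ρ (y j) ybar ≤ ε} : ℝ))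
include hmaj

lemma dist_sub_le_of_mem_majorityRadii (htri : ∀ a b c, ρ a c ≤ ρ a b + ρ b c)
    {s : ℝ} (hs : s ∈ majorityRadii ρ y x) : ρ x ybar - ε ≤ s := by
  obtain ⟨j, hxj, hjy⟩ := Fin.exists_of_half_lt_card_filter hs.2 hmaj
  linarith [htri x (y j) ybar]

lemma dist_add_mem_majorityRadii (hnn : ∀ a b, 0 ≤ ρ a b) (hsymm : ∀ a b, ρ a b = ρ b a)
    (htri : ∀ a b c, ρ a c ≤ ρ a b + ρ b c) (hε : 0 < ε) :
    ρ x ybar + ε ∈ majorityRadii ρ y x := by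
  refine ⟨by linarith [hnn x ybar], hmaj.trans_le ?_⟩
  refine mod_cast card_le_card (monotone_filter_right _ fun j _ hj => ?_)
  linarith [htri x ybar (y j), hsymm ybar (y j)]

lemma abs_sInf_majorityRadii_sub_le (hnn : ∀ a b, 0 ≤ ρ a b) (hsymm : ∀ a b, ρ a b = ρ b a)
    (htri : ∀ a b c, ρ a c ≤ ρ a b + ρ b c) (hε : 0 < ε) :
    |sInf (majorityRadii ρ y x) - ρ x ybar| ≤ ε := by
  have hmem := dist_add_mem_majorityRadii (x := x) hmaj hnn hsymm htri hε
  have hupper : sInf (majorityRadii ρ y x) ≤ ρ x ybar + ε :=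
    csInf_le ⟨0, fun s hs => hs.1⟩ hmem
  have hlower : ρ x ybar - ε ≤ sInf (majorityRadii ρ y x) :=
    le_csInf ⟨_, hmem⟩ fun s hs => dist_sub_le_of_mem_majorityRadii hmaj htri hs
  rw [abs_le]
  constructor <;> linarith

end MajorityRadius

/-- robust distance estimation with a pseudometric.  If strictly more than
`m/2` of the points `y i` lie in the pseudometric ball `B_ε^ρ(ȳ)`, `r i` is the smallest
radius such that `B_{r i}^ρ(y i)` contains strictly more than `m/2` of the points, `r̂`
is the `⌈m/2⌉`-th smallest of the `r i`, and `ℐ = {i : r i ≤ r̂}`, then `ρ(y i, ȳ) ≤ 3ε`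
for all `i ∈ ℐ`. -/
theorem robust_distance_estimation_pseudometric {X : Type*} (m : ℕ) (hm : 1 ≤ m)
    (ρ : X → X → ℝ)
    (hnn : ∀ a b, 0 ≤ ρ a b)
    (hsymm : ∀ a b, ρ a b = ρ b a)
    (htri : ∀ a b c, ρ a c ≤ ρ a b + ρ b c)
    (y : Fin m → X) (ybar : X) (ε : ℝ) (hε : 0 < ε)
    (hmaj : (m : ℝ) / 2 <
      ((Finset.univ.filter (fun j => ρ (y j) ybar ≤ ε)).card : ℝ))
    (r : Fin m → ℝ)
    (hr : ∀ i, r i = sInf {s : ℝ | 0 ≤ s ∧ (m : ℝ) / 2 <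
      ((Finset.univ.filter (fun j => ρ (y i) (y j) ≤ s)).card : ℝ)})
    (rhat : ℝ)
    (hrhat : rhat = r (Tuple.sort r ⟨(m + 1) / 2 - 1, by omega⟩)) :
    ∀ i, r i ≤ rhat → ρ (y i) ybar ≤ 3 * ε := by
  have hclose : ∀ i, |r i - ρ (y i) ybar| ≤ ε := fun i =>
    hr i ▸ abs_sInf_majorityRadii_sub_le hmaj hnn hsymm htri hε
  have hmedian : rhat ≤ 2 * ε := by
    rw [hrhat]
    refine Tuple.apply_sort_le_of_lt_card_filter_le r ?_
    have hnear : (m + 1) / 2 - 1 < #{j | ρ (y j) ybar ≤ ε} := by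
      have hmaj' : m < 2 * #{j | ρ (y j) ybar ≤ ε} := by
        exact_mod_cast (by linarith : (m : ℝ) < 2 * #{j | ρ (y j) ybar ≤ ε})
      omega
    refine hnear.trans_le (card_le_card (monotone_filter_right _ fun j _ hj => ?_))
    linarith [(abs_le.mp (hclose j)).2]
  intro i hi
  linarith [(abs_le.mp (hclose i)).1]
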